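/- Let (N, ⟨·,·⟩) be a finite-dimensional nilpotent metric Jordan algebra with orthonormal basis {E_i}. Define M: N → N by ⟨MX, Y⟩ = −½ Σ_{i,j}⟨XE_i, E_j⟩⟨YE_i, E_j⟩ + ¼ Σ_{i,j}⟨E_iE_j, X⟩⟨E_iE_j, Y⟩. Then Tr M = −¼ Σ_{i,j,k}⟨E_iE_j, E_k⟩² ≤ 0, with equality if and only if the multiplication of N is identically zero. -/

import Mathlib

/-!
Evaluating the defining identity of `M` on `X = Y = E_k` and summing over `k`, both terms
become the sum `S = Σ_{i,j} ‖E_i E_j‖²` (Parseval in the last index; the second term after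
permuting the indices), so `Tr M = -½ S + ¼ S = -¼ S`. Since `S` is a sum of squares of the
structure constants, it vanishes exactly when the product vanishes on the basis, that is,
by bilinearity, identically.
-/

open RealInnerProductSpace

/-- The descending power series A⁰ = A, A^{k+1} = A·A^k of a (Jordan) algebra. -/
def jordanPow {V : Type*} [AddCommGroup V] [Module ℝ V]
    (mul : V →ₗ[ℝ] V →ₗ[ℝ] V) : ℕ → Submodule ℝ V
  | 0 => ⊤
  | (k + 1) => Submodule.span ℝ {z | ∃ x y, y ∈ jordanPow mul k ∧ z = mul x y}

section MomentMap

variable {V W ι κ : Type*} [NormedAddCommGroup V] [InnerProductSpace ℝ V]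
  [NormedAddCommGroup W] [InnerProductSpace ℝ W] [Fintype ι] [Fintype κ]

lemma OrthonormalBasis.sum_sum_sum_inner_sq (mul : V →ₗ[ℝ] V →ₗ[ℝ] W)
    (b : OrthonormalBasis ι ℝ V) (b' : OrthonormalBasis κ ℝ W) :
    ∑ i, ∑ j, ∑ k, ⟪mul (b i) (b j), b' k⟫ ^ 2 = ∑ i, ∑ j, ‖mul (b i) (b j)‖ ^ 2 := by
  simp_rw [b'.sum_sq_inner_left]

lemma OrthonormalBasis.sum_sum_norm_sq_eq_zero_iff (mul : V →ₗ[ℝ] V →ₗ[ℝ] W)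
    (b : OrthonormalBasis ι ℝ V) :
    ∑ i, ∑ j, ‖mul (b i) (b j)‖ ^ 2 = 0 ↔ mul = 0 := by
  have hsq : ∀ i j, 0 ≤ ‖mul (b i) (b j)‖ ^ 2 := fun _ _ ↦ by positivity
  simp only [Finset.sum_eq_zero_iff_of_nonneg fun i _ ↦ Finset.sum_nonneg fun j _ ↦ hsq i j,
    Finset.sum_eq_zero_iff_of_nonneg fun j _ ↦ hsq _ j, Finset.mem_univ, true_implies,
    sq_eq_zero_iff, norm_eq_zero]
  refine ⟨fun h ↦ LinearMap.ext_basis b.toBasis b.toBasis fun i j ↦ by simpa using h i j,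
    fun h i j ↦ by simp [h]⟩

lemma trace_eq_neg_quarter_sum_sum_norm_sq [FiniteDimensional ℝ V]
    (mul : V →ₗ[ℝ] V →ₗ[ℝ] V) (b : OrthonormalBasis ι ℝ V) (M : V →ₗ[ℝ] V)
    (hM : ∀ X Y : V, ⟪M X, Y⟫ =
      -(1/2) * ∑ i, ∑ j, ⟪mul X (b i), b j⟫ * ⟪mul Y (b i), b j⟫
      + (1/4) * ∑ i, ∑ j, ⟪mul (b i) (b j), X⟫ * ⟪mul (b i) (b j), Y⟫) :
    LinearMap.trace ℝ V M = -(1/4) * ∑ i, ∑ j, ‖mul (b i) (b j)‖ ^ 2 := by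
  have hfirst : ∑ k, ∑ i, ∑ j, ⟪mul (b k) (b i), b j⟫ * ⟪mul (b k) (b i), b j⟫ =
      ∑ i, ∑ j, ‖mul (b i) (b j)‖ ^ 2 := by
    simp_rw [← sq, b.sum_sq_inner_left]
  have hsecond : ∑ k, ∑ i, ∑ j, ⟪mul (b i) (b j), b k⟫ * ⟪mul (b i) (b j), b k⟫ =
      ∑ i, ∑ j, ‖mul (b i) (b j)‖ ^ 2 := by
    rw [Finset.sum_comm]
    refine Finset.sum_congr rfl fun i _ ↦ ?_
    rw [Finset.sum_comm]
    simp_rw [← sq, b.sum_sq_inner_left]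
  rw [LinearMap.trace_eq_sum_inner M b]
  simp_rw [real_inner_comm (M _), hM]
  rw [Finset.sum_add_distrib, ← Finset.mul_sum, ← Finset.mul_sum, hfirst, hsecond]
  ring

end MomentMap

theorem nilpotent_moment_map_trace
    {V : Type*} [NormedAddCommGroup V] [InnerProductSpace ℝ V] [FiniteDimensional ℝ V]
    {ι : Type*} [Fintype ι]
    (mul : V →ₗ[ℝ] V →ₗ[ℝ] V)
    (b : OrthonormalBasis ι ℝ V)
    (M : V →ₗ[ℝ] V)
    (hM : ∀ X Y : V, ⟪M X, Y⟫ =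
      -(1/2) * ∑ i, ∑ j, ⟪mul X (b i), b j⟫ * ⟪mul Y (b i), b j⟫
      + (1/4) * ∑ i, ∑ j, ⟪mul (b i) (b j), X⟫ * ⟪mul (b i) (b j), Y⟫) :
    LinearMap.trace ℝ V M = -(1/4) * ∑ i, ∑ j, ∑ k, ⟪mul (b i) (b j), b k⟫ ^ 2 ∧
    LinearMap.trace ℝ V M ≤ 0 ∧
    (LinearMap.trace ℝ V M = 0 ↔ ∀ X Y : V, mul X Y = 0) := by
  have hS : 0 ≤ ∑ i, ∑ j, ‖mul (b i) (b j)‖ ^ 2 := by positivity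
  rw [OrthonormalBasis.sum_sum_sum_inner_sq mul b b,
    trace_eq_neg_quarter_sum_sum_norm_sq mul b M hM]
  refine ⟨rfl, by linarith, ?_⟩
  rw [mul_eq_zero, b.sum_sum_norm_sq_eq_zero_iff mul]
  simp [LinearMap.ext_iff]
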